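/- Global Convergence Theorem for monotone iterative maps (the paper's main Theorem, Appendix A): Let n be a natural number, let K ⊆ ℝⁿ be a compact set, let L : ℝⁿ → ℝ be continuous, let S ⊆ ℝⁿ be a set (the 'stationary points'), and let M : ℝⁿ → Set ℝⁿ be a point-to-set map. Suppose a sequence θ : ℕ → ℝⁿ satisfies: (a) θ(t+1) ∈ M(θ(t)) and θ(t) ∈ K for all t; (b) L(θ(t+1)) ≤ L(θ(t)) for all t; (c) for every x ∉ S and every y ∈ M(x), L(y) < L(x); and (d) M is closed over the complement of S, i.e., whenever x_t → x with x ∉ S, y_t ∈ M(x_t) for all t, and y_t → y, then y ∈ M(x). Then there exists a point θ* ∈ S that is a limit point of the sequence θ, the values L(θ(t)) converge to L(θ*), and moreover every limit point of the sequence θ belongs to S and has L-value equal to L(θ*). -/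
import Mathlib


open Filter Topology

/-- Global Convergence Theorem for monotone iterative maps (Zangwill). -/
theorem global_convergence_theorem
    (n : ℕ) (K : Set (EuclideanSpace ℝ (Fin n))) (hK : IsCompact K)
    (L : EuclideanSpace ℝ (Fin n) → ℝ) (hL : Continuous L)
    (S : Set (EuclideanSpace ℝ (Fin n)))
    (M : EuclideanSpace ℝ (Fin n) → Set (EuclideanSpace ℝ (Fin n)))
    (θ : ℕ → EuclideanSpace ℝ (Fin n))
    (ha : ∀ t, θ (t + 1) ∈ M (θ t) ∧ θ t ∈ K)
    (hb : ∀ t, L (θ (t + 1)) ≤ L (θ t))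
    (hc : ∀ x, x ∉ S → ∀ y ∈ M x, L y < L x)
    (hd : ∀ (x : EuclideanSpace ℝ (Fin n)) (xs : ℕ → EuclideanSpace ℝ (Fin n))
            (y : EuclideanSpace ℝ (Fin n)) (ys : ℕ → EuclideanSpace ℝ (Fin n)),
          x ∉ S → Tendsto xs atTop (𝓝 x) → (∀ t, ys t ∈ M (xs t)) →
          Tendsto ys atTop (𝓝 y) → y ∈ M x) :
    ∃ θstar ∈ S,
      (∃ φ : ℕ → ℕ, StrictMono φ ∧ Tendsto (fun l => θ (φ l)) atTop (𝓝 θstar)) ∧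
      Tendsto (fun t => L (θ t)) atTop (𝓝 (L θstar)) ∧
      (∀ y : EuclideanSpace ℝ (Fin n),
        (∃ φ : ℕ → ℕ, StrictMono φ ∧ Tendsto (fun l => θ (φ l)) atTop (𝓝 y)) →
        y ∈ S ∧ L y = L θstar) := by
  -- L ∘ θ is antitone
  have hanti : Antitone (fun t => L (θ t)) := antitone_nat_of_succ_le hb
  -- K is nonempty and L attains a minimum on K, so L ∘ θ is bounded below
  have hKne : K.Nonempty := ⟨θ 0, (ha 0).2⟩
  obtain ⟨x₀, hx₀K, hx₀min⟩ := hK.exists_isMinOn hKne hL.continuousOn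
  have hbdd : BddBelow (Set.range fun t => L (θ t)) := by
    refine ⟨L x₀, ?_⟩
    rintro r ⟨t, rfl⟩
    exact hx₀min (ha t).2
  -- L ∘ θ converges to its infimum ℓ
  set ℓ : ℝ := ⨅ t, L (θ t) with hℓdef
  have hℓ : Tendsto (fun t => L (θ t)) atTop (𝓝 ℓ) := tendsto_atTop_ciInf hanti hbdd
  -- every limit point has L-value ℓ
  have hval : ∀ y : EuclideanSpace ℝ (Fin n), ∀ φ : ℕ → ℕ, StrictMono φ →
      Tendsto (fun l => θ (φ l)) atTop (𝓝 y) → L y = ℓ := by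
    intro y φ hφm hφ
    have h1 : Tendsto (fun l => L (θ (φ l))) atTop (𝓝 (L y)) :=
      (hL.tendsto y).comp hφ
    have h2 : Tendsto (fun l => L (θ (φ l))) atTop (𝓝 ℓ) :=
      hℓ.comp hφm.tendsto_atTop
    exact tendsto_nhds_unique h1 h2
  -- every limit point is in S
  have hinS : ∀ y : EuclideanSpace ℝ (Fin n), ∀ φ : ℕ → ℕ, StrictMono φ →
      Tendsto (fun l => θ (φ l)) atTop (𝓝 y) → y ∈ S := by
    intro y φ hφm hφ
    by_contra hyS
    -- consider the successor sequence
    have hzK : ∀ l, θ (φ l + 1) ∈ K := fun l => (ha (φ l + 1)).2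
    obtain ⟨w, hwK, ψ, hψm, hw⟩ := hK.tendsto_subseq hzK
    have hwM : w ∈ M y := by
      refine hd y (fun l => θ (φ (ψ l))) w (fun l => θ (φ (ψ l) + 1)) hyS
        (hφ.comp hψm.tendsto_atTop) (fun l => (ha (φ (ψ l))).1) hw
    have hlt : L w < L y := hc y hyS w hwM
    -- but L w = ℓ = L y, contradiction
    have hg : Tendsto (fun l => φ (ψ l) + 1) atTop atTop := by
      refine tendsto_atTop_mono (fun l => ?_) tendsto_id
      exact Nat.le_succ_of_le ((hφm.comp hψm).le_apply)
    have h1 : Tendsto (fun l => L (θ (φ (ψ l) + 1))) atTop (𝓝 (L w)) :=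
      (hL.tendsto w).comp hw
    have h2 : Tendsto (fun l => L (θ (φ (ψ l) + 1))) atTop (𝓝 ℓ) :=
      hℓ.comp hg
    have hLw : L w = ℓ := tendsto_nhds_unique h1 h2
    have hLy : L y = ℓ := hval y φ hφm hφ
    rw [hLw, hLy] at hlt
    exact lt_irrefl _ hlt
  -- extract a limit point of θ
  obtain ⟨θstar, hθK, φ, hφm, hφ⟩ := hK.tendsto_subseq (fun t => (ha t).2)
  have hstarS : θstar ∈ S := hinS θstar φ hφm hφ
  have hstarval : L θstar = ℓ := hval θstar φ hφm hφ
  refine ⟨θstar, hstarS, ⟨φ, hφm, hφ⟩, by rwa [hstarval], ?_⟩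
  rintro y ⟨φ', hφ'm, hφ'⟩
  exact ⟨hinS y φ' hφ'm hφ', (hval y φ' hφ'm hφ').trans hstarval.symm⟩
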